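/- For constants a > 0, b ∈ ℝ, λ̃ ∈ ℝ, and C := (−a² + λ̃/a² + b²)/2, the function f(t) := √((a² + C)·cosh(2t) + a·b·sinh(2t) − C), on the maximal interval around 0 where the radicand is positive, satisfies f''(t) − f(t) = λ̃ / f(t)³, f(0) = a, f'(0) = b. -/

import Mathlib

/-!
If `f = √g` with `g > 0`, then `f'' - f = (2 g g'' - g'² - 4 g²) / (4 f³)`. For
`g t = A cosh 2t + B sinh 2t - C` one has `g'' = 4 (g + C)`, and `cosh² - sinh² = 1` makes the
numerator the constant `4 (A² - B² - C²)`. With `A = a² + C`, `B = a b` this constant is `4 λ̃`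
precisely by the choice of `C`, while `g 0 = a²` and `g' 0 = 2 a b` give the initial values.
-/

open Real Filter Topology

theorem deriv_deriv_sqrt_comp {g g' : ℝ → ℝ} {g'' t : ℝ}
    (hg : ∀ᶠ s in 𝓝 t, HasDerivAt g (g' s) s) (hg' : HasDerivAt g' g'' t) (ht : 0 < g t) :
    deriv (deriv fun s => √(g s)) t = (2 * g'' * g t - g' t ^ 2) / (4 * √(g t) ^ 3) := by
  have hpos : ∀ᶠ s in 𝓝 t, 0 < g s := hg.self_of_nhds.continuousAt.eventually (lt_mem_nhds ht)
  have hderiv : deriv (fun s => √(g s)) =ᶠ[𝓝 t] fun s => g' s / (2 * √(g s)) := by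
    filter_upwards [hg, hpos] with s hs hs0
    exact (hs.sqrt hs0.ne').deriv
  have hsqrt : HasDerivAt (fun s => 2 * √(g s)) (2 * (g' t / (2 * √(g t)))) t :=
    (hg.self_of_nhds.sqrt ht.ne').const_mul 2
  have hroot : 0 < √(g t) := sqrt_pos.mpr ht
  rw [hderiv.deriv_eq, (hg'.fun_div hsqrt (by positivity)).deriv]
  field_simp
  linear_combination 8 * g'' * sq_sqrt ht.le

theorem hasDerivAt_cosh_sinh_two_mul (A B t : ℝ) :
    HasDerivAt (fun s => A * cosh (2 * s) + B * sinh (2 * s))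
      (2 * (B * cosh (2 * t) + A * sinh (2 * t))) t := by
  have h2 : HasDerivAt (fun s : ℝ => 2 * s) 2 t := by simpa using (hasDerivAt_id t).const_mul 2
  refine ((((hasDerivAt_cosh _).comp t h2).const_mul A).add
    (((hasDerivAt_sinh _).comp t h2).const_mul B)).congr_deriv ?_
  ring

theorem deriv_deriv_sqrt_cosh_sinh_sub {A B C t : ℝ}
    (ht : 0 < A * cosh (2 * t) + B * sinh (2 * t) - C) :
    deriv (deriv fun s => √(A * cosh (2 * s) + B * sinh (2 * s) - C)) t
      - √(A * cosh (2 * t) + B * sinh (2 * t) - C)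
      = (A ^ 2 - B ^ 2 - C ^ 2) / √(A * cosh (2 * t) + B * sinh (2 * t) - C) ^ 3 := by
  rw [deriv_deriv_sqrt_comp (g' := fun s => 2 * (B * cosh (2 * s) + A * sinh (2 * s)))
    (Eventually.of_forall fun s => (hasDerivAt_cosh_sinh_two_mul A B s).sub_const C)
    ((hasDerivAt_cosh_sinh_two_mul B A t).const_mul 2) ht]
  set g := A * cosh (2 * t) + B * sinh (2 * t) - C
  have hroot : 0 < √g := sqrt_pos.mpr ht
  field_simp
  linear_combination
    4 * (A ^ 2 - B ^ 2) * cosh_sq_sub_sinh_sq (2 * t) - 4 * (√g ^ 2 + g) * sq_sqrt ht.le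

/-- Explicit solution of f'' − f = λ̃/f³ with f(0)=a, f'(0)=b (case λ = −1):
the ODE holds at every point where the radicand is positive. -/
theorem stmt_14 (a b lamt : ℝ) (ha : 0 < a) (C : ℝ)
    (hC : C = (-a ^ 2 + lamt / a ^ 2 + b ^ 2) / 2) (f : ℝ → ℝ)
    (hf : ∀ t, f t = Real.sqrt ((a ^ 2 + C) * Real.cosh (2 * t) + a * b * Real.sinh (2 * t) - C)) :
    (0 < (a ^ 2 + C) * Real.cosh (2 * 0) + a * b * Real.sinh (2 * 0) - C) ∧
    (∀ t : ℝ, 0 < (a ^ 2 + C) * Real.cosh (2 * t) + a * b * Real.sinh (2 * t) - C →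
      deriv (deriv f) t - f t = lamt / f t ^ 3) ∧
    f 0 = a ∧ deriv f 0 = b := by
  have hf' : f = fun t => √((a ^ 2 + C) * cosh (2 * t) + a * b * sinh (2 * t) - C) := funext hf
  have hg0 : (a ^ 2 + C) * cosh (2 * 0) + a * b * sinh (2 * 0) - C = a ^ 2 := by simp
  have hg0_pos : 0 < (a ^ 2 + C) * cosh (2 * 0) + a * b * sinh (2 * 0) - C := by
    rw [hg0]; positivity
  have hdisc : (a ^ 2 + C) ^ 2 - (a * b) ^ 2 - C ^ 2 = lamt := by
    subst hC; field_simp; ring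
  refine ⟨hg0_pos, fun t ht => ?_, ?_, ?_⟩
  · rw [hf', deriv_deriv_sqrt_cosh_sinh_sub ht, hdisc]
  · rw [hf 0, hg0, sqrt_sq ha.le]
  · rw [hf', (((hasDerivAt_cosh_sinh_two_mul _ _ 0).sub_const C).sqrt hg0_pos.ne').deriv]
    simp only [mul_zero, cosh_zero, mul_one, sinh_zero, add_zero, add_sub_cancel_right,
      sqrt_sq ha.le]
    field_simp [ha.ne']
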